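/- The ratio B(n)/(n−1)! tends to 2 as n tends to infinity, where B(n) = 1 + Σ_{d | n} c(d)·(d + n − 2), the sum ranging over positive divisors d of n. -/

import Mathlib

open Equiv Filter Topology

/-- The cyclic permutation `σ : i ↦ i + 1` of `ZMod n`. -/
def cyc (n : ℕ) : Equiv.Perm (ZMod n) := Equiv.addRight (1 : ZMod n)

/-- The equivalence relation `R₂`: `π R₂ π'` iff `π' = σ^i ∘ π` for some integer `i`. -/
def incSetoid (n : ℕ) : Setoid (Equiv.Perm (ZMod n)) where
  r π π' := ∃ i : ℤ, π' = cyc n ^ i * π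
  iseqv := by
    constructor
    · exact fun π => ⟨0, by simp⟩
    · rintro π π' ⟨i, rfl⟩
      exact ⟨-i, by rw [← mul_assoc, ← zpow_add]; simp⟩
    · rintro a b c ⟨i, rfl⟩ ⟨j, rfl⟩
      exact ⟨j + i, by rw [← mul_assoc, ← zpow_add]⟩

/-- The set of `R₂`-equivalence classes. -/
def IncClasses (n : ℕ) := Quotient (incSetoid n)

section aux
variable {n : ℕ}

lemma cyc_pow (k : ℕ) : (cyc n)^k = Equiv.addRight (k : ZMod n) := by
  simp [cyc, Nat.smul_one_eq_cast]

lemma cyc_zpow (i : ℤ) : (cyc n)^i = Equiv.addRight (i : ZMod n) := by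
  simp [cyc, Int.smul_one_eq_cast]

lemma cyc_pow_n : (cyc n)^n = 1 := by
  rw [cyc_pow]; simp

lemma addRight_inj {a b : ZMod n} (h : Equiv.addRight a = Equiv.addRight b) : a = b := by
  simpa using congrArg (fun e : Perm (ZMod n) => e 0) h

def cycHom (n : ℕ) : Multiplicative (ZMod n) →* Perm (ZMod n) where
  toFun a := Equiv.addRight a.toAdd
  map_one' := Equiv.addRight_zero
  map_mul' a b := by ext x; simp [Equiv.Perm.mul_apply]; ring

lemma orderOf_cyc [NeZero n] : orderOf (cyc n) = n := by
  have h : cyc n = cycHom n (Multiplicative.ofAdd 1) := rfl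
  rw [h, orderOf_injective (cycHom n)
    (fun a b hab => by simpa [cycHom] using addRight_inj hab)]
  simp [ZMod.addOrderOf_one]

lemma incSetoid_eq :
    incSetoid n = QuotientGroup.rightRel (Subgroup.zpowers (cyc n)) := by
  apply Setoid.ext
  intro a b
  rw [QuotientGroup.rightRel_apply]
  constructor
  · rintro ⟨i, rfl⟩
    exact ⟨i, by group⟩
  · rintro ⟨i, hi⟩
    refine ⟨i, ?_⟩
    simp only [] at hi
    rw [hi]; group

lemma card_incClasses [NeZero n] : Nat.card (IncClasses n) = (n-1).factorial := by
  have e : IncClasses n ≃ Perm (ZMod n) ⧸ Subgroup.zpowers (cyc n) :=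
    (Equiv.cast (congrArg Quotient incSetoid_eq)).trans
      (QuotientGroup.quotientRightRelEquivQuotientLeftRel _)
  have h := Subgroup.card_eq_card_quotient_mul_card_subgroup
    (Subgroup.zpowers (cyc n))
  rw [Nat.card_zpowers, orderOf_cyc, Nat.card_eq_fintype_card (α := Perm (ZMod n)),
    Fintype.card_perm, ZMod.card] at h
  have hn : 1 ≤ n := Nat.one_le_iff_ne_zero.mpr (NeZero.ne n)
  have hfac : n.factorial = (n-1).factorial * n := by
    cases n with
    | zero => omega
    | succ m => simp [Nat.factorial_succ]; ring
  rw [Nat.card_congr e]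
  have := h.symm.trans hfac
  exact Nat.eq_of_mul_eq_mul_right (by omega) this
end aux


/-- The well-defined map `inc(π) ↦ inc(π ∘ σ)` on `R₂`-classes. -/
def incShift (n : ℕ) : IncClasses n → IncClasses n :=
  Quot.map (fun π => π * cyc n)
    (by rintro π π' ⟨i, rfl⟩; exact ⟨i, by first | exact mul_assoc _ _ _ | simp only [mul_assoc]⟩)

/-- The 1-cycle (orbit under `inc(ρ) ↦ inc(ρ∘σ)`) of a class `q`. -/
def oneCycle (n : ℕ) (q : IncClasses n) : Set (IncClasses n) :=
  Set.range fun i : ℕ => (incShift n)^[i] q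

section dyn
variable {n : ℕ}

lemma incShift_mk (π : Perm (ZMod n)) :
    incShift n (Quotient.mk (incSetoid n) π) = Quotient.mk (incSetoid n) (π * cyc n) := rfl

lemma incShift_iterate (k : ℕ) (π : Perm (ZMod n)) :
    (incShift n)^[k] (Quotient.mk (incSetoid n) π)
      = Quotient.mk (incSetoid n) (π * (cyc n)^k) := by
  induction k with
  | zero => simp; rfl
  | succ m ih => rw [Function.iterate_succ_apply' (incShift n) m (Quotient.mk (incSetoid n) π), ih, incShift_mk, pow_succ, mul_assoc]

lemma incShift_iterate_n (q : IncClasses n) : (incShift n)^[n] q = q := by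
  induction q using Quotient.ind with
  | _ π => rw [incShift_iterate, cyc_pow_n, mul_one]

lemma isPeriodic (q : IncClasses n) : Function.IsPeriodicPt (incShift n) n q :=
  incShift_iterate_n q

lemma period_dvd (q : IncClasses n) : Function.minimalPeriod (incShift n) q ∣ n :=
  (isPeriodic q).minimalPeriod_dvd

lemma period_pos [NeZero n] (q : IncClasses n) :
    0 < Function.minimalPeriod (incShift n) q :=
  (isPeriodic q).minimalPeriod_pos (Nat.pos_of_ne_zero (NeZero.ne n))

lemma oneCycle_eq_image [NeZero n] (q : IncClasses n) :
    oneCycle n q = (fun i => (incShift n)^[i] q) '' Set.Iio (Function.minimalPeriod (incShift n) q) := by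
  apply Set.Subset.antisymm
  · rintro x ⟨i, rfl⟩
    exact ⟨i % _, Nat.mod_lt _ (period_pos q), Function.iterate_mod_minimalPeriod_eq⟩
  · rintro x ⟨i, _, rfl⟩
    exact ⟨i, rfl⟩

lemma ncard_oneCycle [NeZero n] (q : IncClasses n) :
    (oneCycle n q).ncard = Function.minimalPeriod (incShift n) q := by
  rw [oneCycle_eq_image q,
    Set.ncard_image_of_injOn Function.iterate_injOn_Iio_minimalPeriod]
  show (Set.Iio _).ncard = _
  rw [← Finset.coe_Iio, Set.ncard_coe_finset, Nat.card_Iio]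

lemma mem_oneCycle_self (q : IncClasses n) : q ∈ oneCycle n q := ⟨0, rfl⟩

lemma oneCycle_eq_of_mem [NeZero n] {q q' : IncClasses n} (h : q' ∈ oneCycle n q) :
    oneCycle n q' = oneCycle n q := by
  obtain ⟨i, rfl⟩ := h
  simp only []
  have hq : (incShift n)^[i * (n-1)] ((incShift n)^[i] q) = q := by
    rw [← Function.iterate_add_apply]
    have hin : i * (n-1) + i = n * i := by
      obtain ⟨m, rfl⟩ : ∃ m, n = m + 1 := ⟨n-1, by have := NeZero.ne n; omega⟩
      simp only [Nat.add_sub_cancel]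
      ring
    rw [hin, Function.iterate_mul]
    have : Function.IsPeriodicPt (incShift n) n q := isPeriodic q
    exact Function.IsFixedPt.iterate this i
  apply Set.Subset.antisymm
  · rintro x ⟨j, rfl⟩
    refine ⟨j + i, ?_⟩
    show (incShift n)^[j + i] q = (incShift n)^[j] ((incShift n)^[i] q)
    exact Function.iterate_add_apply _ j i q
  · rintro x ⟨j, rfl⟩
    refine ⟨j + i * (n-1), ?_⟩
    show (incShift n)^[j + i * (n-1)] ((incShift n)^[i] q) = (incShift n)^[j] q
    rw [Function.iterate_add_apply, hq]
end dyn


section fixcount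
variable {n : ℕ}

lemma incSetoid_iff {a b : Perm (ZMod n)} :
    Quotient.mk (incSetoid n) a = Quotient.mk (incSetoid n) b ↔ ∃ i : ℤ, b = cyc n ^ i * a := by
  rw [Quotient.eq]
  exact Iff.rfl

lemma ncard_fix_le [NeZero n] {d : ℕ} (hd : d ≠ 0) :
    {q : IncClasses n | (incShift n)^[d] q = q}.ncard ≤ n^(d+1) := by
  classical
  set Fx := {q : IncClasses n | (incShift n)^[d] q = q} with hFx
  -- data extraction
  have exdata : ∀ q : Fx, ∃ a : ZMod n,
      (Quotient.out q.1) * (cyc n)^d * (Quotient.out q.1)⁻¹ = Equiv.addRight a := by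
    rintro ⟨q, hq⟩
    set π := Quotient.out q with hπ
    have hmk : Quotient.mk (incSetoid n) π = q := Quotient.out_eq q
    have h1 : Quotient.mk (incSetoid n) (π * (cyc n)^d) = Quotient.mk (incSetoid n) π := by
      rw [← incShift_iterate]
      rw [hmk]
      exact hq
    obtain ⟨i, hi⟩ := incSetoid_iff.mp h1.symm
    refine ⟨((i : ℤ) : ZMod n), ?_⟩
    rw [← cyc_zpow, hi]
    group
  choose av hav using exdata
  set Φ : Fx → ZMod n × (Fin d → ZMod n) :=
    fun q => (av q, fun k => (Quotient.out q.1) ((k:ℕ) : ZMod n)) with hΦ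
  have hinj : Function.Injective Φ := by
    rintro q q' h
    rw [Prod.mk.injEq] at h
    obtain ⟨h1, h2⟩ := h
    set π := Quotient.out q.1 with hπ
    set π' := Quotient.out q'.1 with hπ'
    set τ := Equiv.addRight (av q) with hτ
    have hstep : ∀ x : ZMod n, π (x + (d : ZMod n)) = τ (π x) := by
      intro x
      have := congrArg (fun e : Perm (ZMod n) => e (π x)) (hav q)
      simp only [Equiv.Perm.mul_apply, Equiv.Perm.inv_def, hπ, Equiv.symm_apply_apply] at this
      rw [← this, cyc_pow]
      simp [hπ]
    have hstep' : ∀ x : ZMod n, π' (x + (d : ZMod n)) = τ (π' x) := by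
      intro x
      have := congrArg (fun e : Perm (ZMod n) => e (π' x)) (hav q')
      simp only [Equiv.Perm.mul_apply, Equiv.Perm.inv_def, hπ', Equiv.symm_apply_apply] at this
      rw [← h1] at this
      rw [← this, cyc_pow]
      simp [hπ']
    have key : ∀ k r, r < d → π ((d*k + r : ℕ) : ZMod n) = π' ((d*k + r : ℕ) : ZMod n) := by
      intro k
      induction k with
      | zero =>
          intro r hr
          simpa using congrFun h2 ⟨r, hr⟩
      | succ m ih =>
          intro r hr
          have hc : ((d*(m+1) + r : ℕ) : ZMod n) = ((d*m + r : ℕ) : ZMod n) + (d : ZMod n) := by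
            push_cast; ring
          rw [hc, hstep, hstep', ih r hr]
    have hππ' : π = π' := by
      apply Equiv.ext
      intro x
      have hx : ((x.val : ℕ) : ZMod n) = x := ZMod.natCast_rightInverse x
      have hdecomp : d * (x.val / d) + x.val % d = x.val := by
        exact Nat.div_add_mod _ _
      have := key (x.val / d) (x.val % d) (Nat.mod_lt _ (Nat.pos_of_ne_zero hd))
      rwa [hdecomp, hx] at this
    have : q.1 = q'.1 := Quotient.out_injective hππ'
    exact Subtype.ext this
  have hle : Nat.card Fx ≤ Nat.card (ZMod n × (Fin d → ZMod n)) :=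
    Nat.card_le_card_of_injective Φ hinj
  rw [← Nat.card_coe_set_eq]
  calc Nat.card Fx ≤ Nat.card (ZMod n × (Fin d → ZMod n)) := hle
    _ = n^(d+1) := by
        simp [Nat.card_eq_fintype_card, ZMod.card]
        rw [pow_succ]
        ring
end fixcount


/-- `c(d)`: the number of 1-cycles of cardinality `d`. -/
noncomputable def numCycles (n d : ℕ) : ℕ :=
  Set.ncard {S : Set (IncClasses n) | (∃ q, S = oneCycle n q) ∧ S.ncard = d}

section count
variable {n : ℕ}

lemma counting (hn : n ≠ 0) :
    (∑ d ∈ n.divisors, numCycles n d * d = (n-1).factorial) ∧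
    (∀ d ∈ n.divisors, numCycles n d * d ≤ n^(d+1)) := by
  classical
  haveI : NeZero n := ⟨hn⟩
  haveI : Finite (IncClasses n) := by unfold IncClasses; infer_instance
  haveI : Fintype (IncClasses n) := Fintype.ofFinite _
  set tf : Set (IncClasses n) → Finset (IncClasses n) :=
    fun S => (Set.toFinite S).toFinset with htf
  have htfmem : ∀ S q, q ∈ tf S ↔ q ∈ S := by
    intro S q; exact (Set.toFinite S).mem_toFinset
  set 𝒪 : Finset (Set (IncClasses n)) :=
    (Set.toFinite {S | ∃ q, S = oneCycle n q}).toFinset with h𝒪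
  have hmem : ∀ S, S ∈ 𝒪 ↔ ∃ q, S = oneCycle n q := by
    intro S; simp [h𝒪, Set.Finite.mem_toFinset]
  have horb : ∀ S ∈ 𝒪, ∀ q ∈ S, S = oneCycle n q := by
    intro S hS q hq
    obtain ⟨p, rfl⟩ := (hmem S).mp hS
    exact (oneCycle_eq_of_mem hq).symm
  have hdisj : ∀ S ∈ 𝒪, ∀ T ∈ 𝒪, S ≠ T → Disjoint (tf S) (tf T) := by
    intro S hS T hT hST
    rw [Finset.disjoint_left]
    intro q hqS hqT
    exact hST ((horb S hS q ((htfmem S q).mp hqS)).trans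
      (horb T hT q ((htfmem T q).mp hqT)).symm)
  have hcardS : ∀ S, (tf S).card = S.ncard := by
    intro S; rw [Set.ncard_eq_toFinset_card _ (Set.toFinite S)]
  have hperiod : ∀ S ∈ 𝒪, ∀ q ∈ S,
      S.ncard = Function.minimalPeriod (incShift n) q := by
    intro S hS q hq
    rw [horb S hS q hq, ncard_oneCycle]
  have hdiv : ∀ S ∈ 𝒪, S.ncard ∈ n.divisors := by
    intro S hS
    obtain ⟨p, rfl⟩ := (hmem S).mp hS
    rw [Nat.mem_divisors]
    exact ⟨(ncard_oneCycle p) ▸ period_dvd p, hn⟩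
  have hfilter : ∀ d, numCycles n d = (𝒪.filter (fun S => S.ncard = d)).card := by
    intro d
    have : {S : Set (IncClasses n) | (∃ q, S = oneCycle n q) ∧ S.ncard = d}
        = ↑(𝒪.filter (fun S => S.ncard = d)) := by
      ext S
      simp only [Set.mem_setOf_eq, Finset.coe_filter, hmem]
    rw [numCycles, this, Set.ncard_coe_finset]
  have hinner : ∀ d, ∑ S ∈ 𝒪.filter (fun S => S.ncard = d), S.ncard
      = numCycles n d * d := by
    intro d
    rw [Finset.sum_congr rfl (fun S hS => (Finset.mem_filter.mp hS).2),
      Finset.sum_const, smul_eq_mul, hfilter]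
  constructor
  · have hcover : 𝒪.biUnion tf = Finset.univ := by
      apply Finset.eq_univ_of_forall
      intro q
      rw [Finset.mem_biUnion]
      exact ⟨oneCycle n q, (hmem _).mpr ⟨q, rfl⟩, (htfmem _ q).mpr (mem_oneCycle_self q)⟩
    have htotal : ∑ S ∈ 𝒪, S.ncard = (n-1).factorial := by
      rw [← Finset.sum_congr rfl (fun S _ => hcardS S), ← Finset.card_biUnion hdisj, hcover,
        Finset.card_univ, ← Nat.card_eq_fintype_card, card_incClasses]
    rw [← htotal, ← Finset.sum_fiberwise_of_maps_to hdiv (fun S => S.ncard)]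
    exact Finset.sum_congr rfl (fun d _ => (hinner d).symm)
  · intro d hd
    have hdd : d ∣ n ∧ n ≠ 0 := Nat.mem_divisors.mp hd
    have hd0 : d ≠ 0 := by
      rintro rfl; exact hn (Nat.eq_zero_of_zero_dvd hdd.1)
    have hsub : (𝒪.filter (fun S => S.ncard = d)).biUnion tf
        ⊆ tf {q : IncClasses n | (incShift n)^[d] q = q} := by
      rw [Finset.biUnion_subset]
      intro S hS
      rw [Finset.mem_filter] at hS
      intro q hq
      rw [htfmem] at hq ⊢
      have hper : Function.minimalPeriod (incShift n) q = d :=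
        (hperiod S hS.1 q hq).symm.trans hS.2
      show (incShift n)^[d] q = q
      rw [← hper]
      exact Function.iterate_minimalPeriod
    calc numCycles n d * d
        = ∑ S ∈ 𝒪.filter (fun S => S.ncard = d), S.ncard := (hinner d).symm
      _ = ((𝒪.filter (fun S => S.ncard = d)).biUnion tf).card := by
          rw [Finset.card_biUnion (fun S hS T hT => hdisj S (Finset.mem_filter.mp hS).1
            T (Finset.mem_filter.mp hT).1)]
          exact Finset.sum_congr rfl (fun S _ => (hcardS S).symm)
      _ ≤ (tf {q : IncClasses n | (incShift n)^[d] q = q}).card := Finset.card_le_card hsub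
      _ = Set.ncard {q : IncClasses n | (incShift n)^[d] q = q} := hcardS _
      _ ≤ n^(d+1) := ncard_fix_le hd0
end count



lemma real_step {n : ℕ} (hn : 40 ≤ n) : ((n:ℝ)+1)^(n+9) ≤ (n:ℝ)^(n+10) := by
  have hn' : (40:ℝ) ≤ n := by exact_mod_cast hn
  have hnpos : (0:ℝ) < n := by linarith
  have h1 : (n:ℝ)+1 ≤ n * Real.exp (1/n) := by
    have := Real.add_one_le_exp (1/(n:ℝ))
    have h2 : (n:ℝ) * (1/n + 1) ≤ n * Real.exp (1/n) := by
      apply mul_le_mul_of_nonneg_left this (le_of_lt hnpos)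
    calc (n:ℝ)+1 = n * (1/n + 1) := by field_simp; ring
      _ ≤ _ := h2
  have h2 : ((n:ℝ)+1)^(n+9) ≤ ((n:ℝ) * Real.exp (1/n))^(n+9) := by
    apply pow_le_pow_left₀ (by linarith) h1
  have h3 : ((n:ℝ) * Real.exp (1/n))^(n+9) = (n:ℝ)^(n+9) * Real.exp (((n+9:ℕ):ℝ) * (1/n)) := by
    rw [mul_pow, ← Real.exp_nat_mul]
  have h4 : Real.exp (((n+9:ℕ):ℝ) * (1/(n:ℝ))) ≤ Real.exp 2 := by
    apply Real.exp_le_exp.mpr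
    rw [mul_one_div, div_le_iff₀ hnpos]
    push_cast
    nlinarith
  have h5 : Real.exp 2 ≤ (n:ℝ) := by
    have he := Real.exp_one_lt_d9
    have : Real.exp 2 = Real.exp 1 * Real.exp 1 := by
      rw [← Real.exp_add]; norm_num
    nlinarith [Real.exp_pos 1]
  calc ((n:ℝ)+1)^(n+9) ≤ (n:ℝ)^(n+9) * Real.exp (((n+9:ℕ):ℝ) * (1/n)) := by
        rw [← h3]; exact h2
    _ ≤ (n:ℝ)^(n+9) * n := by
        apply mul_le_mul_of_nonneg_left (le_trans h4 h5) (by positivity)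
    _ = (n:ℝ)^(n+10) := by ring

lemma nat_step {n : ℕ} (hn : 40 ≤ n) : (n+1)^(n+9) ≤ n^(n+10) := by
  have := real_step hn
  exact_mod_cast this

lemma fact_sq {n : ℕ} (hn : 40 ≤ n) : n^(n+8) ≤ ((n-1).factorial)^2 := by
  induction n, hn using Nat.le_induction with
  | base =>
      show 40^48 ≤ (Nat.factorial 39)^2
      norm_num [Nat.factorial]
  | succ m hm ih =>
      have h1 : (m+1-1).factorial^2 = m^2 * ((m-1).factorial)^2 := by
        simp only [Nat.add_sub_cancel]
        obtain ⟨k, rfl⟩ : ∃ k, m = k + 1 := ⟨m - 1, by omega⟩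
        rw [Nat.factorial_succ]
        simp only [Nat.add_sub_cancel]
        ring
      rw [h1]
      calc (m+1)^(m+1+8) = (m+1)^(m+9) := by ring_nf
        _ ≤ m^(m+10) := nat_step hm
        _ = m^2 * m^(m+8) := by ring
        _ ≤ m^2 * ((m-1).factorial)^2 := Nat.mul_le_mul_left _ ih


/-- `B(n) = 1 + Σ_{d ∣ n} c(d)·(d + n − 2)`, the sum over positive divisors `d` of `n`. -/
noncomputable def Bbound (n : ℕ) : ℕ :=
  1 + ∑ d ∈ n.divisors, numCycles n d * (d + n - 2)

section final

lemma divisors_card_le (n : ℕ) : n.divisors.card ≤ n := by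
  calc n.divisors.card ≤ (Finset.Ico 1 (n+1)).card := by
        apply Finset.card_le_card
        intro d hd
        exact Finset.mem_of_mem_filter d hd
    _ = n := by simp

lemma proper_divisor_le_half {n d : ℕ} (hn : n ≠ 0) (hd : d ∈ n.divisors.erase n) :
    d ≤ n / 2 := by
  obtain ⟨hne, hdvd⟩ := Finset.mem_erase.mp hd
  obtain ⟨hdvd', -⟩ := Nat.mem_divisors.mp hdvd
  obtain ⟨m, rfl⟩ := hdvd'
  have hm : 2 ≤ m := by
    rcases m with - | - | m
    · omega
    · omega
    · omega
  rw [Nat.le_div_iff_mul_le (by norm_num)]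
  calc d * 2 ≤ d * m := Nat.mul_le_mul_left _ hm
    _ = d * m := rfl

set_option maxHeartbeats 1000000 in
lemma est {n : ℕ} (hn : 40 ≤ n) :
    |(Bbound n : ℝ) / (((n-1).factorial : ℕ) : ℝ) - 2| ≤ 5 / n := by
  have hn0 : n ≠ 0 := by omega
  obtain ⟨hsum, hbnd⟩ := counting hn0
  set F := (n-1).factorial with hFdef
  set cN := numCycles n n with hcNdef
  set K := ∑ d ∈ n.divisors.erase n, numCycles n d * d with hKdef
  set S' := ∑ d ∈ n.divisors.erase n, numCycles n d with hS'def
  have hmemn : n ∈ n.divisors := Nat.mem_divisors_self n hn0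
  -- F = cN * n + K
  have hF : cN * n + K = F := by
    rw [← hsum, hKdef, hcNdef]
    exact Finset.add_sum_erase n.divisors (fun d => numCycles n d * d) hmemn
  -- B = 1 + F + (cN + S')*(n-2)
  have hB : Bbound n = 1 + F + (cN + S') * (n-2) := by
    rw [Bbound]
    have h1 : ∀ d ∈ n.divisors, numCycles n d * (d + n - 2)
        = numCycles n d * d + numCycles n d * (n-2) := by
      intro d hd
      have : d + n - 2 = d + (n - 2) := by omega
      rw [this, Nat.mul_add]
    have hsplit : ∑ d ∈ n.divisors, numCycles n d = cN + S' := by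
      rw [hcNdef, hS'def]
      exact (Finset.add_sum_erase n.divisors (fun d => numCycles n d) hmemn).symm
    rw [Finset.sum_congr rfl h1, Finset.sum_add_distrib, hsum, ← Finset.sum_mul, hsplit]
    ring
  -- S' ≤ K
  have hS'K : S' ≤ K := by
    apply Finset.sum_le_sum
    intro d hd
    have : 1 ≤ d := Nat.pos_of_mem_divisors (Finset.mem_of_mem_erase hd)
    calc numCycles n d = numCycles n d * 1 := by ring
      _ ≤ numCycles n d * d := Nat.mul_le_mul_left _ this
  -- K ≤ n^(n/2+2)
  have hKb : K ≤ n^(n/2+2) := by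
    calc K ≤ (n.divisors.erase n).card • n^(n/2+1) := by
          apply Finset.sum_le_card_nsmul
          intro d hd
          calc numCycles n d * d ≤ n^(d+1) := hbnd d (Finset.mem_of_mem_erase hd)
            _ ≤ n^(n/2+1) := Nat.pow_le_pow_right (by omega)
                (by have := proper_divisor_le_half hn0 hd; omega)
      _ ≤ n * n^(n/2+1) := by
          rw [smul_eq_mul]
          apply Nat.mul_le_mul_right
          calc (n.divisors.erase n).card ≤ n.divisors.card := Finset.card_le_card
                (Finset.erase_subset _ _)
            _ ≤ n := divisors_card_le n
      _ = n^(n/2+2) := by rw [← pow_succ']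
  -- n^2 * K ≤ F
  have hK2 : n^2 * K ≤ F := by
    have h1 : n^2 * K ≤ n^(n/2+4) := by
      calc n^2 * K ≤ n^2 * n^(n/2+2) := Nat.mul_le_mul_left _ hKb
        _ = n^(n/2+4) := by rw [← pow_add]; ring_nf
    have h2 : (n^(n/2+4))^2 ≤ F^2 := by
      calc (n^(n/2+4))^2 = n^(2*(n/2)+8) := by rw [← pow_mul]; ring_nf
        _ ≤ n^(n+8) := Nat.pow_le_pow_right (by omega) (by omega)
        _ ≤ F^2 := fact_sq hn
    exact le_trans h1 ((Nat.pow_le_pow_iff_left (by norm_num : (2:ℕ) ≠ 0)).mp h2)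
  -- n^2 ≤ F
  have hn2F : n^2 ≤ F := by
    have h2 : (n^2)^2 ≤ F^2 := by
      calc (n^2)^2 = n^4 := by ring
        _ ≤ n^(n+8) := Nat.pow_le_pow_right (by omega) (by omega)
        _ ≤ F^2 := fact_sq hn
    exact (Nat.pow_le_pow_iff_left (by norm_num : (2:ℕ) ≠ 0)).mp h2
  -- move to ℝ
  have hFpos : (0:ℝ) < F := by
    have : 0 < F := Nat.factorial_pos _
    exact_mod_cast this
  have hnRpos : (0:ℝ) < n := by
    have : 0 < n := by omega
    exact_mod_cast this
  have hFR : (cN:ℝ) * n + K = F := by exact_mod_cast hF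
  have hBR : (Bbound n : ℝ) = 1 + F + (cN + S') * ((n:ℝ)-2) := by
    have h2 : ((n-2 : ℕ):ℝ) = (n:ℝ) - 2 := by
      have : (2:ℕ) ≤ n := by omega
      push_cast [this]
      ring
    rw [hB]
    push_cast [← h2]
    ring
  have hS'KR : (S':ℝ) ≤ K := by exact_mod_cast hS'K
  have hK2R : (n:ℝ)^2 * K ≤ F := by exact_mod_cast hK2
  have hn2FR : (n:ℝ)^2 ≤ F := by exact_mod_cast hn2F
  have hnR : (40:ℝ) ≤ n := by exact_mod_cast hn
  have hKnn : (0:ℝ) ≤ K := Nat.cast_nonneg _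
  have hSnn : (0:ℝ) ≤ S' := Nat.cast_nonneg _
  have hcNnn : (0:ℝ) ≤ cN := Nat.cast_nonneg _
  have hcNR : (cN:ℝ) * n = F - K := by linarith
  have e1 : (n:ℝ) * (Bbound n) = n + n*F + ((n:ℝ)-2)*(F-K) + n*((n:ℝ)-2)*S' := by
    rw [hBR]
    linear_combination ((n:ℝ)-2) * hcNR
  have hnF : (n:ℝ) ≤ F := by nlinarith [hn2FR, hnR]
  have p0 : (n:ℝ)^2*S' ≤ (n:ℝ)^2*K :=
    mul_le_mul_of_nonneg_left hS'KR (sq_nonneg _)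
  have p1a : (n:ℝ)*((n:ℝ)-2) ≤ (n:ℝ)^2 := by nlinarith [hnR]
  have p1b : (n:ℝ)*((n:ℝ)-2)*S' ≤ (n:ℝ)^2*S' :=
    mul_le_mul_of_nonneg_right p1a hSnn
  have p1 : (n:ℝ)*((n:ℝ)-2)*S' ≤ F := p1b.trans (p0.trans hK2R)
  have p2 : (0:ℝ) ≤ ((n:ℝ)-2)*K := by nlinarith [hKnn, hnR]
  have p3 : ((n:ℝ)-2)*K ≤ F := by nlinarith [hK2R, hKnn, hnR]
  have p4 : (0:ℝ) ≤ (n:ℝ)*((n:ℝ)-2)*S' := by nlinarith [hSnn, hnR]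
  have q1 : ((n:ℝ)-2)*(F-K) ≤ (n:ℝ)*F - 2*F := by nlinarith [p2]
  have q2 : (n:ℝ)*F - 3*F ≤ ((n:ℝ)-2)*(F-K) := by nlinarith [p3]
  have key1 : (n:ℝ) * (Bbound n) ≤ 2*((n:ℝ)*F) + 5*F := by
    have hn' : (0:ℝ) ≤ (n:ℝ) := by linarith
    linarith [e1, q1, p1, hnF]
  have key2 : 2*((n:ℝ)*F) ≤ (n:ℝ)*(Bbound n) + 5*F := by
    have hn' : (0:ℝ) ≤ (n:ℝ) := by linarith
    linarith [e1, q2, p4, hnF, hnRpos]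
  have hnFpos : (0:ℝ) < n * F := by positivity
  have hrw : (Bbound n : ℝ)/F - 2 = ((n:ℝ)*(Bbound n) - 2*((n:ℝ)*F))/((n:ℝ)*F) := by
    field_simp
  rw [hrw]
  have habs : |(n:ℝ)*(Bbound n) - 2*((n:ℝ)*F)| ≤ 5*F :=
    abs_le.mpr ⟨by linarith, by linarith⟩
  calc |((n:ℝ)*(Bbound n) - 2*((n:ℝ)*F))/((n:ℝ)*F)|
      = |(n:ℝ)*(Bbound n) - 2*((n:ℝ)*F)| / ((n:ℝ)*F) := by
        rw [abs_div, abs_of_pos hnFpos]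
    _ ≤ (5*F)/((n:ℝ)*F) := by
        exact div_le_div_of_nonneg_right habs hnFpos.le
    _ = 5/n := by
        field_simp

end final



/-- `B(n)/(n−1)! → 2` as `n → ∞`. -/
theorem stmt2 :
    Tendsto (fun n : ℕ => (Bbound n : ℝ) / ((n - 1).factorial : ℝ)) atTop (𝓝 2) := by
  have h0 : Filter.Tendsto
      (fun n : ℕ => (Bbound n : ℝ) / ((n - 1).factorial : ℝ) - 2)
      Filter.atTop (nhds 0) := by
    refine squeeze_zero_norm' (a := fun n : ℕ => 5/(n:ℝ)) ?_
      (tendsto_const_div_atTop_nhds_zero_nat 5)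
    filter_upwards [Filter.eventually_ge_atTop 40] with n hn
    simpa using est hn
  have := h0.add (tendsto_const_nhds (x := (2:ℝ)))
  simpa using this
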